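/- arXiv:1605.04017 — 2 statements merged into one kernel-verified Lean document; each statement's English description precedes it below -/
import Mathlib

section
/- For the choice f(t,s) = t·s/(t+s) (so that μ_n is the distribution of the effective resistance between the endpoints of the n-th 'line-circle-line' graph G_n), the variance V_n of μ_n satisfies V_n^{1/n} → 2 + 1/8 = 17/8 as n → ∞; that is, V_n = (2 + 1/8 + o(1))ⁿ. -/
open MeasureTheory Filter

/-- The recursively defined sequence of measures: `μ₀ = (δ₁ + δ₂)/2` and `μ_{n+1}` is the
pushforward of `μ_n ⊗ μ_n ⊗ μ_n ⊗ μ_n` under `(a,b,c,d) ↦ a + b + f c d`. -/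
noncomputable def mu (f : ℝ → ℝ → ℝ) : ℕ → Measure ℝ
  | 0 => (2 : ENNReal)⁻¹ • Measure.dirac 1 + (2 : ENNReal)⁻¹ • Measure.dirac 2
  | n + 1 =>
      Measure.map (fun p : ℝ × ℝ × ℝ × ℝ => p.1 + p.2.1 + f p.2.2.1 p.2.2.2)
        ((mu f n).prod ((mu f n).prod ((mu f n).prod (mu f n))))

/-- The mean of `μ_n`. -/
noncomputable def En (f : ℝ → ℝ → ℝ) (n : ℕ) : ℝ := ∫ x, x ∂(mu f n)

/-- The variance of `μ_n`. -/
noncomputable def Vn (f : ℝ → ℝ → ℝ) (n : ℕ) : ℝ := ∫ x, (x - En f n) ^ 2 ∂(mu f n)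

/-!
If `A, B, C, D` are independent copies of `X_n ∼ μ_n`, then `X_{n+1} = A + B + F(C, D)` with
`F(c, d) = cd/(c + d) = (c + d)/4 - (c - d)²/(4(c + d))`, so independence gives
`V_{n+1} = 2 V_n + Var F(C, D)`, while `Var ((C + D)/4) = V_n / 8`. The support of `μ_n` lies in
`[s, 2s]` with `s = (5/2)ⁿ`, so the correction term `(C - D)²/(4(C + D))` has second moment at
most `E (C - D)⁴ / (64 s²)`. The same independence expansion applied to fourth central moments
shows that these are `O(s²)`, whereas `V_n ≥ 2ⁿ/4`; hence `Var F(C, D) = (1/8 + o(1)) V_n`, i.e.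
`V_{n+1}/V_n → 2 + 1/8`, and the `n`-th root follows by Cesàro averaging of logarithms.
-/

open ProbabilityTheory Set Topology
open scoped ENNReal

lemma centralMoment_id_eq (μ : Measure ℝ) (k : ℕ) :
    centralMoment id k μ = ∫ x, (x - ∫ y, y ∂μ) ^ k ∂μ := rfl

lemma centralMoment_nonneg_of_even {Ω : Type*} {mΩ : MeasurableSpace Ω} (X : Ω → ℝ)
    (μ : Measure Ω) {k : ℕ} (hk : Even k) : 0 ≤ centralMoment X k μ :=
  integral_nonneg fun _ => hk.pow_nonneg _

lemma centralMoment_id_map {Ω : Type*} {mΩ : MeasurableSpace Ω} {σ : Measure Ω} {ψ : Ω → ℝ}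
    (hψ : AEMeasurable ψ σ) (k : ℕ) :
    centralMoment id k (σ.map ψ) = centralMoment ψ k σ := by
  simp only [centralMoment, Pi.pow_apply, Pi.sub_apply]
  rw [integral_map hψ aestronglyMeasurable_id,
    integral_map hψ ((measurable_id.sub_const _).pow_const k).aestronglyMeasurable]
  rfl

lemma ae_prod_fst_snd {α β : Type*} {mα : MeasurableSpace α} {mβ : MeasurableSpace β}
    {μ : Measure α} {ν : Measure β} [SFinite μ] [SFinite ν] {P : α → Prop} {Q : β → Prop}
    (hP : ∀ᵐ x ∂μ, P x) (hQ : ∀ᵐ y ∂ν, Q y) : ∀ᵐ z ∂μ.prod ν, P z.1 ∧ Q z.2 :=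
  (Measure.quasiMeasurePreserving_fst.ae hP).and (Measure.quasiMeasurePreserving_snd.ae hQ)

lemma memLp_top_id_of_ae_mem_Icc {μ : Measure ℝ} {a b : ℝ} (hμ : ∀ᵐ x ∂μ, x ∈ Icc a b) :
    MemLp id ∞ μ :=
  memLp_top_of_bound aestronglyMeasurable_id (max |a| |b|) <| by
    filter_upwards [hμ] with x hx using abs_le_max_abs_abs hx.1 hx.2

section IndependentSum

variable {α β : Type*} {mα : MeasurableSpace α} {mβ : MeasurableSpace β}
  {μ : Measure α} {ν : Measure β} {g : α → ℝ} {h : β → ℝ}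

lemma MeasureTheory.MemLp.integrable_pow_of_top [IsFiniteMeasure μ] (hg : MemLp g ∞ μ) (i : ℕ) :
    Integrable (fun x => g x ^ i) μ := by
  induction i with
  | zero => simp
  | succ i ih =>
    simp only [pow_succ]
    exact ih.mul_of_top_left hg

lemma integral_add_pow_prod [IsFiniteMeasure μ] [IsFiniteMeasure ν] (hg : MemLp g ∞ μ)
    (hh : MemLp h ∞ ν) (k : ℕ) :
    ∫ z, (g z.1 + h z.2) ^ k ∂μ.prod ν =
      ∑ i ∈ Finset.range (k + 1), (∫ x, g x ^ i ∂μ) * (∫ y, h y ^ (k - i) ∂ν) * k.choose i := by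
  simp_rw [add_pow]
  rw [integral_finsetSum _ fun i _ =>
    ((hg.integrable_pow_of_top i).mul_prod (hh.integrable_pow_of_top _)).mul_const _]
  refine Finset.sum_congr rfl fun i _ => ?_
  rw [integral_mul_const, ← integral_prod_mul (fun x => g x ^ i) (fun y => h y ^ (k - i))]

variable [IsProbabilityMeasure μ] [IsProbabilityMeasure ν]

lemma centralMoment_order_zero (X : α → ℝ) : centralMoment X 0 μ = 1 := by
  simp [centralMoment]

lemma centralMoment_add_prod (hg : MemLp g ∞ μ) (hh : MemLp h ∞ ν) (k : ℕ) :
    centralMoment (fun z => g z.1 + h z.2) k (μ.prod ν) =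
      ∑ i ∈ Finset.range (k + 1), centralMoment g i μ * centralMoment h (k - i) ν * k.choose i := by
  have hg' : MemLp (fun x => g x - ∫ x, g x ∂μ) ∞ μ := hg.sub (memLp_const _)
  have hh' : MemLp (fun y => h y - ∫ y, h y ∂ν) ∞ ν := hh.sub (memLp_const _)
  have hmean : ∫ z, g z.1 + h z.2 ∂μ.prod ν = (∫ x, g x ∂μ) + ∫ y, h y ∂ν := by
    simpa [Finset.sum_range_succ, add_comm] using integral_add_pow_prod hg hh 1
  have := integral_add_pow_prod hg' hh' k
  simp only [centralMoment, Pi.pow_apply, Pi.sub_apply, hmean]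
  convert this using 3 with z
  ring

lemma centralMoment_add_prod_two (hg : MemLp g ∞ μ) (hh : MemLp h ∞ ν) :
    centralMoment (fun z => g z.1 + h z.2) 2 (μ.prod ν) =
      centralMoment g 2 μ + centralMoment h 2 ν := by
  simp [centralMoment_add_prod hg hh, Finset.sum_range_succ, centralMoment_order_zero]
  ring

lemma centralMoment_add_prod_four (hg : MemLp g ∞ μ) (hh : MemLp h ∞ ν) :
    centralMoment (fun z => g z.1 + h z.2) 4 (μ.prod ν) =
      centralMoment g 4 μ + 6 * centralMoment g 2 μ * centralMoment h 2 ν +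
        centralMoment h 4 ν := by
  simp [centralMoment_add_prod hg hh, Finset.sum_range_succ, centralMoment_order_zero,
    Nat.choose]
  ring

end IndependentSum

lemma integral_sub_pow_four_prod {μ : Measure ℝ} [IsProbabilityMeasure μ] (hμ : MemLp id ∞ μ) :
    ∫ z, (z.1 - z.2) ^ 4 ∂μ.prod μ = 2 * centralMoment id 4 μ + 6 * centralMoment id 2 μ ^ 2 := by
  set m := ∫ x, x ∂μ
  have hneg (j : ℕ) : ∫ y, (m - y) ^ j ∂μ = (-1) ^ j * centralMoment id j μ := by
    rw [centralMoment_id_eq, ← integral_const_mul]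
    congr with y
    rw [← neg_sub, neg_pow]
  have hpos (j : ℕ) : ∫ x, (x - m) ^ j ∂μ = centralMoment id j μ := rfl
  have key := integral_add_pow_prod (hμ.sub (memLp_const m)) ((memLp_const m).sub hμ) 4
  simp only [Pi.sub_apply, id, sub_add_sub_cancel, hpos, hneg] at key
  rw [key]
  simp [Finset.sum_range_succ, centralMoment_order_zero, Nat.choose]
  ring

lemma integral_centeredSum_pow (μ : Measure ℝ) (k : ℕ) :
    ∫ z, ((z.1 + z.2 - ∫ w, (w.1 + w.2) ∂μ.prod μ) / 4) ^ k ∂μ.prod μ =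
      centralMoment (fun z : ℝ × ℝ => id z.1 + id z.2) k (μ.prod μ) / 4 ^ k := by
  simp only [div_pow, integral_div]
  rfl

lemma abs_sub_sq_sub_sq_le (a b : ℝ) {ε : ℝ} (hε : 0 < ε) :
    |(a - b) ^ 2 - a ^ 2| ≤ ε * a ^ 2 + (1 + 1 / ε) * b ^ 2 := by
  have h₁ : 0 ≤ (ε * a - b) ^ 2 / ε := by positivity
  have h₂ : 0 ≤ (ε * a + b) ^ 2 / ε := by positivity
  have e₀ : (a - b) ^ 2 - a ^ 2 = b ^ 2 - 2 * (a * b) := by ring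
  have e₁ : (ε * a - b) ^ 2 / ε = ε * a ^ 2 + b ^ 2 / ε - 2 * (a * b) := by field_simp; ring
  have e₂ : (ε * a + b) ^ 2 / ε = ε * a ^ 2 + b ^ 2 / ε + 2 * (a * b) := by field_simp; ring
  have e₃ : (1 + 1 / ε) * b ^ 2 = b ^ 2 + b ^ 2 / ε := by ring
  rw [abs_le, e₀, e₃]
  constructor <;> linarith [sq_nonneg a, sq_nonneg b]

lemma sub_pow_four_le (a b : ℝ) : (a - b) ^ 4 ≤ 8 * a ^ 4 + 8 * b ^ 4 := by
  nlinarith [sq_nonneg (a ^ 2 - b ^ 2), sq_nonneg (a + b), sq_nonneg (a * b),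
    sq_nonneg ((a + b) ^ 2), sq_nonneg ((a - b) ^ 2)]

section PointwiseBounds

variable {Ω : Type*} {mΩ : MeasurableSpace Ω} {σ : Measure Ω} [IsFiniteMeasure σ]
  {t r : Ω → ℝ}

lemma abs_integral_sub_sq_sub_integral_sq_le (ht : MemLp t ∞ σ) (hr : MemLp r ∞ σ) {ε : ℝ}
    (hε : 0 < ε) :
    |∫ ω, (t ω - r ω) ^ 2 ∂σ - ∫ ω, t ω ^ 2 ∂σ| ≤
      ε * ∫ ω, t ω ^ 2 ∂σ + (1 + 1 / ε) * ∫ ω, r ω ^ 2 ∂σ := by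
  have ht2 := ht.integrable_pow_of_top 2
  have hr2 := hr.integrable_pow_of_top 2
  have htr : MemLp (fun ω => t ω - r ω) ∞ σ := ht.sub hr
  rw [← integral_sub (htr.integrable_pow_of_top 2) ht2, ← integral_const_mul,
    ← integral_const_mul, ← integral_add (ht2.const_mul _) (hr2.const_mul _)]
  refine (abs_integral_le_integral_abs).trans (integral_mono_of_nonneg
    (Eventually.of_forall fun _ => abs_nonneg _) ((ht2.const_mul _).add (hr2.const_mul _))
    (Eventually.of_forall fun ω => ?_))
  exact abs_sub_sq_sub_sq_le (t ω) (r ω) hε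

lemma integral_sub_pow_four_le (ht : MemLp t ∞ σ) (hr : MemLp r ∞ σ) :
    ∫ ω, (t ω - r ω) ^ 4 ∂σ ≤ 8 * ∫ ω, t ω ^ 4 ∂σ + 8 * ∫ ω, r ω ^ 4 ∂σ := by
  have ht4 := ht.integrable_pow_of_top 4
  have hr4 := hr.integrable_pow_of_top 4
  rw [← integral_const_mul, ← integral_const_mul, ← integral_add (ht4.const_mul _)
    (hr4.const_mul _)]
  have htr : MemLp (fun ω => t ω - r ω) ∞ σ := ht.sub hr
  refine integral_mono (htr.integrable_pow_of_top 4) ((ht4.const_mul _).add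
    (hr4.const_mul _)) fun ω => ?_
  exact sub_pow_four_le (t ω) (r ω)

end PointwiseBounds

lemma tendsto_rpow_one_div_of_tendsto_div {u : ℕ → ℝ} {L : ℝ} (hu : ∀ n, 0 < u n) (hL : 0 < L)
    (h : Tendsto (fun n => u (n + 1) / u n) atTop (𝓝 L)) :
    Tendsto (fun n : ℕ => u n ^ (1 / (n : ℝ))) atTop (𝓝 L) := by
  have hsum (n : ℕ) : ∑ i ∈ Finset.range n, Real.log (u (i + 1) / u i) =
      Real.log (u n) - Real.log (u 0) := by
    simp only [Real.log_div (hu _).ne' (hu _).ne', Finset.sum_range_sub (fun i => Real.log (u i))]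
  have hlog : Tendsto (fun n : ℕ => (n : ℝ)⁻¹ * (Real.log (u n) - Real.log (u 0)) +
      (n : ℝ)⁻¹ * Real.log (u 0)) atTop (𝓝 (Real.log L + 0)) := by
    refine Tendsto.add ?_ <| by
      simpa using (tendsto_inv_atTop_nhds_zero_nat (𝕜 := ℝ)).mul_const (Real.log (u 0))
    simpa only [hsum] using (h.log hL.ne').cesaro
  have hexp := (Real.continuous_exp.tendsto _).comp hlog
  rw [add_zero, Real.exp_log hL] at hexp
  refine hexp.congr fun n => ?_
  rw [Function.comp_apply, Real.rpow_def_of_pos (hu n)]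
  ring_nf

noncomputable def stepMeasure (f : ℝ → ℝ → ℝ) (μ : Measure ℝ) : Measure ℝ :=
  (μ.prod (μ.prod (μ.prod μ))).map fun p => p.1 + p.2.1 + f p.2.2.1 p.2.2.2

lemma mu_succ (f : ℝ → ℝ → ℝ) (n : ℕ) : mu f (n + 1) = stepMeasure f (mu f n) := rfl

section Step

variable {f : ℝ → ℝ → ℝ} {μ : Measure ℝ} [IsProbabilityMeasure μ]
  (hμ : MemLp id ∞ μ) (hf : MemLp (Function.uncurry f) ∞ (μ.prod μ))
include hμ hf

lemma memLp_top_add_uncurry :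
    MemLp (fun q : ℝ × ℝ × ℝ => id q.1 + Function.uncurry f q.2) ∞ (μ.prod (μ.prod μ)) :=
  (hμ.comp_fst _).add (hf.comp_snd μ)

lemma memLp_top_stepMeasure_map :
    MemLp (fun p : ℝ × ℝ × ℝ × ℝ => p.1 + p.2.1 + f p.2.2.1 p.2.2.2) ∞
      (μ.prod (μ.prod (μ.prod μ))) := by
  convert (hμ.comp_fst _).add ((memLp_top_add_uncurry hμ hf).comp_snd μ) using 1
  ext p
  simp only [Pi.add_apply, id, Function.uncurry, add_assoc]

lemma isProbabilityMeasure_stepMeasure : IsProbabilityMeasure (stepMeasure f μ) :=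
  Measure.isProbabilityMeasure_map
    (memLp_top_stepMeasure_map hμ hf).aestronglyMeasurable.aemeasurable

lemma centralMoment_stepMeasure_eq (k : ℕ) :
    centralMoment id k (stepMeasure f μ) =
      centralMoment (fun p : ℝ × ℝ × ℝ × ℝ =>
        id p.1 + (fun q => id q.1 + Function.uncurry f q.2) p.2) k
        (μ.prod (μ.prod (μ.prod μ))) := by
  rw [stepMeasure, centralMoment_id_map
    (memLp_top_stepMeasure_map hμ hf).aestronglyMeasurable.aemeasurable]
  simp only [id, add_assoc, Function.uncurry]

lemma centralMoment_stepMeasure_two :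
    centralMoment id 2 (stepMeasure f μ) =
      2 * centralMoment id 2 μ + centralMoment (Function.uncurry f) 2 (μ.prod μ) := by
  rw [centralMoment_stepMeasure_eq hμ hf, centralMoment_add_prod_two hμ
    (memLp_top_add_uncurry hμ hf), centralMoment_add_prod_two hμ hf]
  ring

lemma centralMoment_stepMeasure_four :
    centralMoment id 4 (stepMeasure f μ) =
      2 * centralMoment id 4 μ + 6 * centralMoment id 2 μ ^ 2 +
        12 * centralMoment id 2 μ * centralMoment (Function.uncurry f) 2 (μ.prod μ) +
          centralMoment (Function.uncurry f) 4 (μ.prod μ) := by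
  rw [centralMoment_stepMeasure_eq hμ hf, centralMoment_add_prod_four hμ
    (memLp_top_add_uncurry hμ hf), centralMoment_add_prod_four hμ hf,
    centralMoment_add_prod_two hμ hf]
  ring

end Step

lemma ae_mem_Icc_stepMeasure {f : ℝ → ℝ → ℝ} {μ : Measure ℝ} [SFinite μ]
    (hf : Measurable (Function.uncurry f)) {a b a' b' : ℝ} (hμ : ∀ᵐ x ∂μ, x ∈ Icc a b)
    (hab : ∀ c ∈ Icc a b, ∀ d ∈ Icc a b, f c d ∈ Icc a' b') :
    ∀ᵐ x ∂stepMeasure f μ, x ∈ Icc (2 * a + a') (2 * b + b') := by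
  have hψ : Measurable fun p : ℝ × ℝ × ℝ × ℝ => p.1 + p.2.1 + f p.2.2.1 p.2.2.2 :=
    (measurable_fst.add measurable_snd.fst).add (hf.comp measurable_snd.snd)
  rw [stepMeasure, ae_map_iff (p := (· ∈ Icc _ _)) hψ.aemeasurable measurableSet_Icc]
  filter_upwards [ae_prod_fst_snd hμ (ae_prod_fst_snd hμ (ae_prod_fst_snd hμ hμ))]
    with p ⟨h₁, h₂, h₃, h₄⟩
  have h := hab _ h₃ _ h₄
  exact ⟨by linarith [h₁.1, h₂.1, h.1], by linarith [h₁.2, h₂.2, h.2]⟩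

noncomputable def parallel (t u : ℝ) : ℝ := t * u / (t + u)

noncomputable def parallelDefect (z : ℝ × ℝ) : ℝ := (z.1 - z.2) ^ 2 / (4 * (z.1 + z.2))

lemma measurable_parallel : Measurable (Function.uncurry parallel) := by
  unfold parallel; fun_prop

lemma measurable_parallelDefect : Measurable parallelDefect := by
  unfold parallelDefect; fun_prop

lemma parallel_mem_Icc {s c d : ℝ} (hs : 0 < s) (hc : c ∈ Icc s (2 * s))
    (hd : d ∈ Icc s (2 * s)) : parallel c d ∈ Icc (s / 2) s := by
  obtain ⟨hc1, hc2⟩ := hc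
  obtain ⟨hd1, hd2⟩ := hd
  have hcd : 0 < c + d := by linarith
  rw [parallel, mem_Icc, div_le_div_iff₀ two_pos hcd, div_le_iff₀ hcd]
  constructor <;> nlinarith

lemma parallel_eq_sub_parallelDefect {c d : ℝ} (h : c + d ≠ 0) :
    parallel c d = (c + d) / 4 - parallelDefect (c, d) := by
  rw [parallel, parallelDefect]
  field_simp
  ring

lemma parallelDefect_mem_Icc {s c d : ℝ} (hs : 0 < s) (hc : c ∈ Icc s (2 * s))
    (hd : d ∈ Icc s (2 * s)) : parallelDefect (c, d) ∈ Icc 0 (s / 8) := by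
  obtain ⟨hc1, hc2⟩ := hc
  obtain ⟨hd1, hd2⟩ := hd
  have hcd : 0 < 4 * (c + d) := by linarith
  simp only [parallelDefect, mem_Icc]
  rw [div_le_iff₀ hcd]
  exact ⟨by positivity, by nlinarith⟩

lemma parallelDefect_sq_le {s c d : ℝ} (hs : 0 < s) (hc : c ∈ Icc s (2 * s))
    (hd : d ∈ Icc s (2 * s)) : parallelDefect (c, d) ^ 2 ≤ (c - d) ^ 4 / (64 * s ^ 2) := by
  obtain ⟨hc1, hc2⟩ := hc
  obtain ⟨hd1, hd2⟩ := hd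
  have hcd : 8 * s ≤ 4 * (c + d) := by linarith
  rw [parallelDefect, div_pow, div_le_div_iff₀ (by nlinarith) (by positivity)]
  have := pow_le_pow_left₀ (by positivity) hcd 2
  nlinarith [pow_nonneg (sq_nonneg (c - d)) 2]

section ParallelMoments

variable {μ : Measure ℝ} [IsProbabilityMeasure μ] {s : ℝ}

lemma memLp_top_uncurry_parallel (hs : 0 < s) (hμ : ∀ᵐ x ∂μ, x ∈ Icc s (2 * s)) :
    MemLp (Function.uncurry parallel) ∞ (μ.prod μ) :=
  memLp_top_of_bound measurable_parallel.aestronglyMeasurable s <| by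
    filter_upwards [ae_prod_fst_snd hμ hμ] with z hz
    have h := parallel_mem_Icc hs hz.1 hz.2
    rw [Real.norm_eq_abs, abs_le, Function.uncurry_def]
    constructor <;> linarith [h.1, h.2]

lemma ae_parallelDefect_mem_Icc (hs : 0 < s) (hμ : ∀ᵐ x ∂μ, x ∈ Icc s (2 * s)) :
    ∀ᵐ z ∂μ.prod μ, parallelDefect z ∈ Icc 0 (s / 8) := by
  filter_upwards [ae_prod_fst_snd hμ hμ] with z hz
  exact parallelDefect_mem_Icc hs hz.1 hz.2

lemma memLp_top_parallelDefect (hs : 0 < s) (hμ : ∀ᵐ x ∂μ, x ∈ Icc s (2 * s)) :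
    MemLp parallelDefect ∞ (μ.prod μ) :=
  memLp_top_of_bound measurable_parallelDefect.aestronglyMeasurable (s / 8) <| by
    filter_upwards [ae_parallelDefect_mem_Icc hs hμ] with z hz
    rw [Real.norm_eq_abs, abs_le]
    constructor <;> linarith [hz.1, hz.2]

lemma memLp_top_parallelDefect_sub_integral (hs : 0 < s)
    (hμ : ∀ᵐ x ∂μ, x ∈ Icc s (2 * s)) :
    MemLp (fun z => parallelDefect z - ∫ w, parallelDefect w ∂μ.prod μ) ∞ (μ.prod μ) :=
  (memLp_top_parallelDefect hs hμ).sub (memLp_const _)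

lemma variance_parallelDefect_le (hs : 0 < s) (hμ : ∀ᵐ x ∂μ, x ∈ Icc s (2 * s)) :
    Var[parallelDefect; μ.prod μ] ≤
      (2 * centralMoment id 4 μ + 6 * centralMoment id 2 μ ^ 2) / (64 * s ^ 2) := by
  have hid := memLp_top_id_of_ae_mem_Icc hμ
  have hdiff : MemLp (fun z : ℝ × ℝ => id z.1 - id z.2) ∞ (μ.prod μ) :=
    (hid.comp_fst μ).sub (hid.comp_snd μ)
  refine (variance_le_expectation_sq measurable_parallelDefect.aestronglyMeasurable).trans ?_
  rw [← integral_sub_pow_four_prod hid, ← integral_div]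
  refine integral_mono_ae ((memLp_top_parallelDefect hs hμ).integrable_pow_of_top 2)
    ((hdiff.integrable_pow_of_top 4).div_const _) ?_
  filter_upwards [ae_prod_fst_snd hμ hμ] with z hz
  exact parallelDefect_sq_le hs hz.1 hz.2

lemma parallel_sub_integral_ae_eq (hs : 0 < s) (hμ : ∀ᵐ x ∂μ, x ∈ Icc s (2 * s)) :
    (fun z => Function.uncurry parallel z - ∫ w, Function.uncurry parallel w ∂μ.prod μ)
      =ᵐ[μ.prod μ] fun z => (z.1 + z.2 - ∫ w, (w.1 + w.2) ∂μ.prod μ) / 4 -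
        (parallelDefect z - ∫ w, parallelDefect w ∂μ.prod μ) := by
  have hid := memLp_top_id_of_ae_mem_Icc hμ
  have hsum : Integrable (fun w : ℝ × ℝ => w.1 + w.2) (μ.prod μ) :=
    ((hid.comp_fst μ).add (hid.comp_snd μ)).integrable le_top
  have hP : Function.uncurry parallel =ᵐ[μ.prod μ] fun z => (z.1 + z.2) / 4 - parallelDefect z := by
    filter_upwards [ae_prod_fst_snd hμ hμ] with z hz
    exact parallel_eq_sub_parallelDefect (by linarith [hz.1.1, hz.2.1])
  have hint : ∫ w, Function.uncurry parallel w ∂μ.prod μ =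
      (∫ w, (w.1 + w.2) ∂μ.prod μ) / 4 - ∫ w, parallelDefect w ∂μ.prod μ := by
    rw [integral_congr_ae hP, integral_sub (hsum.div_const 4)
      ((memLp_top_parallelDefect hs hμ).integrable le_top), integral_div]
  filter_upwards [hP] with z hz
  rw [hz, hint]
  ring

lemma memLp_top_centeredSum (hid : MemLp id ∞ μ) :
    MemLp (fun z : ℝ × ℝ => (z.1 + z.2 - ∫ w, (w.1 + w.2) ∂μ.prod μ) / 4) ∞ (μ.prod μ) := by
  have hS : MemLp (fun z : ℝ × ℝ => z.1 + z.2 - ∫ w, (w.1 + w.2) ∂μ.prod μ) ∞ (μ.prod μ) :=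
    ((hid.comp_fst μ).add (hid.comp_snd μ)).sub (memLp_const _)
  simpa only [div_eq_mul_inv] using hS.mul_const 4⁻¹

lemma centralMoment_parallel_eq (hs : 0 < s) (hμ : ∀ᵐ x ∂μ, x ∈ Icc s (2 * s)) (k : ℕ) :
    centralMoment (Function.uncurry parallel) k (μ.prod μ) = ∫ z,
      ((z.1 + z.2 - ∫ w, (w.1 + w.2) ∂μ.prod μ) / 4 -
        (parallelDefect z - ∫ w, parallelDefect w ∂μ.prod μ)) ^ k ∂μ.prod μ := by
  refine integral_congr_ae ?_
  filter_upwards [parallel_sub_integral_ae_eq hs hμ] with z hz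
  simp only [Pi.pow_apply, Pi.sub_apply, hz]

lemma abs_centralMoment_parallel_two_sub_le (hs : 0 < s) (hμ : ∀ᵐ x ∂μ, x ∈ Icc s (2 * s))
    {ε : ℝ} (hε : 0 < ε) :
    |centralMoment (Function.uncurry parallel) 2 (μ.prod μ) - centralMoment id 2 μ / 8| ≤
      ε * (centralMoment id 2 μ / 8) + (1 + 1 / ε) *
        ((2 * centralMoment id 4 μ + 6 * centralMoment id 2 μ ^ 2) / (64 * s ^ 2)) := by
  have hid := memLp_top_id_of_ae_mem_Icc hμ
  have hT : ∫ z, ((z.1 + z.2 - ∫ w, (w.1 + w.2) ∂μ.prod μ) / 4) ^ 2 ∂μ.prod μ =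
      centralMoment id 2 μ / 8 := by
    rw [integral_centeredSum_pow μ, centralMoment_add_prod_two hid hid]
    ring
  rw [centralMoment_parallel_eq hs hμ, ← hT]
  refine (abs_integral_sub_sq_sub_integral_sq_le (memLp_top_centeredSum hid)
    (memLp_top_parallelDefect_sub_integral hs hμ) hε).trans ?_
  rw [← variance_eq_integral measurable_parallelDefect.aemeasurable]
  gcongr
  exact variance_parallelDefect_le hs hμ

lemma centralMoment_parallel_four_le (hs : 0 < s) (hμ : ∀ᵐ x ∂μ, x ∈ Icc s (2 * s)) :
    centralMoment (Function.uncurry parallel) 4 (μ.prod μ) ≤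
      (2 * centralMoment id 4 μ + 6 * centralMoment id 2 μ ^ 2) / 16 := by
  have hid := memLp_top_id_of_ae_mem_Icc hμ
  have hr := memLp_top_parallelDefect_sub_integral hs hμ
  set X := 2 * centralMoment id 4 μ + 6 * centralMoment id 2 μ ^ 2
  have hX : 0 ≤ X := by
    have := centralMoment_nonneg_of_even id μ (by decide : Even 4)
    positivity
  have hT : ∫ z, ((z.1 + z.2 - ∫ w, (w.1 + w.2) ∂μ.prod μ) / 4) ^ 4 ∂μ.prod μ = X / 256 := by
    rw [integral_centeredSum_pow μ, centralMoment_add_prod_four hid hid]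
    ring
  have hRbound : ∀ᵐ z ∂μ.prod μ, (parallelDefect z - ∫ w, parallelDefect w ∂μ.prod μ) ^ 4 ≤
      s ^ 2 / 64 * (parallelDefect z - ∫ w, parallelDefect w ∂μ.prod μ) ^ 2 := by
    have hint := (memLp_top_parallelDefect hs hμ).integrable le_top
    have hE0 : 0 ≤ ∫ w, parallelDefect w ∂μ.prod μ :=
      integral_nonneg_of_ae ((ae_parallelDefect_mem_Icc hs hμ).mono fun z hz => hz.1)
    have hE1 : ∫ w, parallelDefect w ∂μ.prod μ ≤ s / 8 := by
      simpa using integral_mono_ae hint (integrable_const (s / 8))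
        ((ae_parallelDefect_mem_Icc hs hμ).mono fun z hz => hz.2)
    filter_upwards [ae_parallelDefect_mem_Icc hs hμ] with z hz
    have h2 : (parallelDefect z - ∫ w, parallelDefect w ∂μ.prod μ) ^ 2 ≤ s ^ 2 / 64 := by
      nlinarith [hz.1, hz.2]
    nlinarith [sq_nonneg (parallelDefect z - ∫ w, parallelDefect w ∂μ.prod μ)]
  have hR : ∫ z, (parallelDefect z - ∫ w, parallelDefect w ∂μ.prod μ) ^ 4 ∂μ.prod μ ≤
      X / 4096 := by
    calc _ ≤ ∫ z, s ^ 2 / 64 * (parallelDefect z - ∫ w, parallelDefect w ∂μ.prod μ) ^ 2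
          ∂μ.prod μ :=
          integral_mono_ae (hr.integrable_pow_of_top 4)
            ((hr.integrable_pow_of_top 2).const_mul _) hRbound
      _ = s ^ 2 / 64 * Var[parallelDefect; μ.prod μ] := by
          rw [integral_const_mul, variance_eq_integral measurable_parallelDefect.aemeasurable]
      _ ≤ s ^ 2 / 64 * (X / (64 * s ^ 2)) := by
          gcongr
          exact variance_parallelDefect_le hs hμ
      _ = X / 4096 := by field_simp; ring
  rw [centralMoment_parallel_eq hs hμ]
  refine (integral_sub_pow_four_le (memLp_top_centeredSum hid) hr).trans ?_
  linarith

end ParallelMoments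

lemma integral_mu_zero (f : ℝ → ℝ → ℝ) (g : ℝ → ℝ) : ∫ x, g x ∂mu f 0 = (g 1 + g 2) / 2 := by
  have hint (a : ℝ) : Integrable g ((2 : ℝ≥0∞)⁻¹ • Measure.dirac a) :=
    (integrable_dirac enorm_lt_top).smul_measure (by simp)
  rw [mu, integral_add_measure (hint 1) (hint 2), integral_smul_measure, integral_smul_measure,
    integral_dirac, integral_dirac]
  simp only [ENNReal.toReal_inv, ENNReal.toReal_ofNat, smul_eq_mul]
  ring

lemma isProbabilityMeasure_mu_parallel_and_ae_mem_Icc (n : ℕ) :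
    IsProbabilityMeasure (mu parallel n) ∧
      ∀ᵐ x ∂mu parallel n, x ∈ Icc ((5 / 2) ^ n) (2 * (5 / 2) ^ n) := by
  induction n with
  | zero =>
    refine ⟨⟨by simp [mu, ENNReal.inv_two_add_inv_two]⟩, ?_⟩
    simp only [mu, ae_add_measure_iff, Measure.ae_ennreal_smul_measure_iff
      (ENNReal.inv_ne_zero.2 ENNReal.ofNat_ne_top)]
    norm_num
  | succ n ih =>
    obtain ⟨hprob, hμ⟩ := ih
    have hs : (0 : ℝ) < (5 / 2) ^ n := by positivity
    refine ⟨isProbabilityMeasure_stepMeasure (memLp_top_id_of_ae_mem_Icc hμ)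
      (memLp_top_uncurry_parallel hs hμ), ?_⟩
    rw [mu_succ]
    convert ae_mem_Icc_stepMeasure measurable_parallel hμ
      (fun c hc d hd => parallel_mem_Icc hs hc hd) using 4 <;> ring

instance isProbabilityMeasure_mu_parallel (n : ℕ) : IsProbabilityMeasure (mu parallel n) :=
  (isProbabilityMeasure_mu_parallel_and_ae_mem_Icc n).1

lemma ae_mem_Icc_mu_parallel (n : ℕ) :
    ∀ᵐ x ∂mu parallel n, x ∈ Icc ((5 / 2) ^ n) (2 * (5 / 2) ^ n) :=
  (isProbabilityMeasure_mu_parallel_and_ae_mem_Icc n).2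

lemma centralMoment_mu_parallel_zero :
    centralMoment id 2 (mu parallel 0) = 1 / 4 ∧ centralMoment id 4 (mu parallel 0) = 1 / 16 := by
  simp only [centralMoment_id_eq, integral_mu_zero]
  norm_num

lemma moment_error_le {s V M : ℝ} (hs : 0 < s) (hV₀ : 0 ≤ V) (hV : V ≤ s / 4)
    (hM : M ≤ 3 / 16 * s ^ 2) : (2 * M + 6 * V ^ 2) / (64 * s ^ 2) ≤ 3 / 256 := by
  rw [div_le_iff₀ (by positivity)]
  nlinarith

/- `3 / 16` is the least `c` such that `M ≤ c s²` survives the fourth-moment recursion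
`M' ≤ 17/8 M + 99/8 V²` under `V ≤ s / 4`. -/
lemma centralMoment_mu_parallel_bounds (n : ℕ) :
    2 ^ n / 4 ≤ centralMoment id 2 (mu parallel n) ∧
      centralMoment id 2 (mu parallel n) ≤ (5 / 2) ^ n / 4 ∧
        centralMoment id 4 (mu parallel n) ≤ 3 / 16 * ((5 / 2) ^ n) ^ 2 := by
  induction n with
  | zero =>
    obtain ⟨h₂, h₄⟩ := centralMoment_mu_parallel_zero
    rw [h₂, h₄]
    norm_num
  | succ n ih =>
    obtain ⟨hVlo, hVhi, hM⟩ := ih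
    have hs : (0 : ℝ) < (5 / 2) ^ n := by positivity
    have hμ := ae_mem_Icc_mu_parallel n
    have hid := memLp_top_id_of_ae_mem_Icc hμ
    have hP := memLp_top_uncurry_parallel hs hμ
    have hW₂ := centralMoment_nonneg_of_even (Function.uncurry parallel)
      ((mu parallel n).prod (mu parallel n)) even_two
    have hW₂' := abs_centralMoment_parallel_two_sub_le hs hμ one_pos
    have hW₄ := centralMoment_parallel_four_le hs hμ
    rw [mu_succ, centralMoment_stepMeasure_two hid hP, centralMoment_stepMeasure_four hid hP,
      pow_succ (2 : ℝ), pow_succ (5 / 2 : ℝ)]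
    set s : ℝ := (5 / 2) ^ n
    set V := centralMoment id 2 (mu parallel n)
    set M := centralMoment id 4 (mu parallel n)
    set W₂ := centralMoment (Function.uncurry parallel) 2 ((mu parallel n).prod (mu parallel n))
    have hV₀ : 1 / 4 ≤ V := le_trans (by linarith [one_le_pow₀ (M₀ := ℝ) one_le_two (n := n)]) hVlo
    have hX := moment_error_le hs (by linarith) hVhi hM
    have hW₂le : W₂ ≤ V / 2 := by linarith [(abs_le.1 hW₂').2]
    refine ⟨by linarith, by linarith, ?_⟩
    nlinarith

/- With `ε = (3/4)ⁿ` in `abs_centralMoment_parallel_two_sub_le`, the error `(1 + 1/ε) / V_n`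
is at most `4 ((1/2)ⁿ + (2/3)ⁿ)` because `V_n ≥ 2ⁿ/4`. -/
lemma abs_centralMoment_mu_parallel_succ_div_sub_le (n : ℕ) :
    |centralMoment id 2 (mu parallel (n + 1)) / centralMoment id 2 (mu parallel n) - 17 / 8| ≤
      (3 / 4) ^ n / 8 + 3 / 64 * ((1 / 2) ^ n + (2 / 3) ^ n) := by
  obtain ⟨hVlo, hVhi, hM⟩ := centralMoment_mu_parallel_bounds n
  have hs : (0 : ℝ) < (5 / 2) ^ n := by positivity
  have hμ := ae_mem_Icc_mu_parallel n
  have hε : (0 : ℝ) < (3 / 4) ^ n := by positivity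
  have hW₂ := abs_centralMoment_parallel_two_sub_le hs hμ hε
  rw [mu_succ, centralMoment_stepMeasure_two (memLp_top_id_of_ae_mem_Icc hμ)
    (memLp_top_uncurry_parallel hs hμ)]
  set V := centralMoment id 2 (mu parallel n)
  set W₂ := centralMoment (Function.uncurry parallel) 2 ((mu parallel n).prod (mu parallel n))
  have hV : 0 < V := lt_of_lt_of_le (by positivity) hVlo
  have hX := moment_error_le hs hV.le hVhi hM
  have hinv : 1 / (3 / 4 : ℝ) ^ n = (4 / 3) ^ n := by rw [one_div, ← inv_pow]; norm_num
  have h₁ : (1 / 2 : ℝ) ^ n * 2 ^ n = 1 := by rw [← mul_pow]; norm_num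
  have h₂ : (2 / 3 : ℝ) ^ n * 2 ^ n = (4 / 3) ^ n := by rw [← mul_pow]; norm_num
  have hrest :
      (1 + 1 / (3 / 4 : ℝ) ^ n) * (3 / 256) ≤ 3 / 64 * ((1 / 2) ^ n + (2 / 3) ^ n) * V :=
    calc (1 + 1 / (3 / 4 : ℝ) ^ n) * (3 / 256)
        = 3 / 64 * ((1 / 2) ^ n + (2 / 3) ^ n) * (2 ^ n / 4) := by
          rw [hinv]; linear_combination (-3 / 256) * h₁ + (-3 / 256) * h₂
      _ ≤ 3 / 64 * ((1 / 2) ^ n + (2 / 3) ^ n) * V := by gcongr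
  have hW₂' : |W₂ - V / 8| ≤ (3 / 4) ^ n * (V / 8) + (1 + 1 / (3 / 4 : ℝ) ^ n) * (3 / 256) :=
    hW₂.trans (by gcongr)
  rw [show (2 * V + W₂) / V - 17 / 8 = (W₂ - V / 8) / V by field_simp; ring, abs_div,
    abs_of_pos hV, div_le_iff₀ hV]
  linarith

lemma tendsto_centralMoment_mu_parallel_succ_div :
    Tendsto (fun n => centralMoment id 2 (mu parallel (n + 1)) / centralMoment id 2 (mu parallel n))
      atTop (𝓝 (17 / 8)) := by
  have hpow (r : ℝ) (h₀ : 0 ≤ r) (h₁ : r < 1) : Tendsto (fun n : ℕ => r ^ n) atTop (𝓝 0) :=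
    tendsto_pow_atTop_nhds_zero_of_lt_one h₀ h₁
  have hbound : Tendsto (fun n : ℕ => (3 / 4 : ℝ) ^ n / 8 + 3 / 64 * ((1 / 2) ^ n + (2 / 3) ^ n))
      atTop (𝓝 0) := by
    simpa using ((hpow (3 / 4) (by norm_num) (by norm_num)).div_const 8).add
      (((hpow (1 / 2) (by norm_num) (by norm_num)).add
        (hpow (2 / 3) (by norm_num) (by norm_num))).const_mul (3 / 64 : ℝ))
  refine tendsto_iff_norm_sub_tendsto_zero.2 (squeeze_zero (fun _ => norm_nonneg _)
    (fun n => ?_) hbound)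
  exact abs_centralMoment_mu_parallel_succ_div_sub_le n

/-- For `f(t,s) = ts/(t+s)` (parallel resistance), the variance of the effective resistance
of the "line-circle-line" graph `G_n` is of order `(2 + 1/8 + o(1))ⁿ`. -/
theorem stmt3 :
    Tendsto (fun n : ℕ => Vn (fun t s => t * s / (t + s)) n ^ (1 / (n : ℝ)))
      atTop (nhds (2 + 1 / 8)) := by
  have hpos (n : ℕ) : 0 < centralMoment id 2 (mu parallel n) :=
    lt_of_lt_of_le (by positivity) (centralMoment_mu_parallel_bounds n).1
  show Tendsto (fun n : ℕ => centralMoment id 2 (mu parallel n) ^ (1 / (n : ℝ))) atTop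
    (𝓝 (2 + 1 / 8))
  rw [show (2 + 1 / 8 : ℝ) = 17 / 8 by norm_num]
  exact tendsto_rpow_one_div_of_tendsto_div hpos (by norm_num)
    tendsto_centralMoment_mu_parallel_succ_div
end

section
/- Let f : ℝ → ℝ → ℝ be measurable, let S be a Borel set of full μ_n-measure, and suppose there are constants A, B ≥ 0 such that (f(a₁,a₂) − f(a₃,a₄))² ≤ A(a₁−a₃)² + B(a₂−a₄)² for all a₁, a₂, a₃, a₄ ∈ S. Assume μ_n has finite second moment. Then ∫∫ (x−y)² dμ_{n+1}(x) dμ_{n+1}(y) ≤ (2 + A + B) · ∫∫ (x−y)² dμ_n(x) dμ_n(y); equivalently, if X and X' are independent with law μ_{n+1} and Y, Y' are independent with law μ_n, then E[(X−X')²] ≤ (2+A+B)·E[(Y−Y')²]. -/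
open MeasureTheory Filter

/-!
For independent `X, X'` with law `μ`, `E[(X - X')²] = 2 Var[μ]`, so the claim is a bound on
variances. A sample of `μ_{n+1}` is `a + b + f(c, d)` with independent summands, hence
`Var[μ_{n+1}] = 2 Var[μ_n] + Var[f(c, d)]`; and applying the hypothesis on `f` to two independent
copies `(c, d)`, `(c', d')` gives `Var[f(c, d)] ≤ (A + B) Var[μ_n]`.
-/

open ProbabilityTheory
open scoped ENNReal

section Product

variable {α β γ : Type*} [MeasurableSpace α] [MeasurableSpace β] [MeasurableSpace γ]
  {μ : Measure α} {ν : Measure β} {ρ : Measure γ}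

lemma MeasureTheory.ae_prod_and [SFinite μ] [SFinite ν] {p : α → Prop} {q : β → Prop}
    (hp : ∀ᵐ x ∂μ, p x) (hq : ∀ᵐ y ∂ν, q y) : ∀ᵐ z ∂μ.prod ν, p z.1 ∧ q z.2 :=
  (Measure.quasiMeasurePreserving_fst.ae hp).and (Measure.quasiMeasurePreserving_snd.ae hq)

variable {X : α → ℝ} {Y : β → ℝ} {Z : γ → ℝ}

lemma memLp_add_add_prod {q : ℝ≥0∞} [IsFiniteMeasure μ] [IsFiniteMeasure ν] [IsFiniteMeasure ρ]
    (hX : MemLp X q μ) (hY : MemLp Y q ν) (hZ : MemLp Z q ρ) :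
    MemLp (fun p ↦ X p.1 + Y p.2.1 + Z p.2.2) q (μ.prod (ν.prod ρ)) :=
  ((hX.comp_fst _).add ((hY.comp_fst ρ).comp_snd μ)).add ((hZ.comp_snd ν).comp_snd μ)

variable [IsProbabilityMeasure μ] [IsProbabilityMeasure ν] [IsProbabilityMeasure ρ]

lemma variance_add_add_prod (hX : MemLp X 2 μ) (hY : MemLp Y 2 ν) (hZ : MemLp Z 2 ρ) :
    Var[fun p ↦ X p.1 + Y p.2.1 + Z p.2.2; μ.prod (ν.prod ρ)] =
      Var[X; μ] + Var[Y; ν] + Var[Z; ρ] := by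
  have hYZ : MemLp (fun q : β × γ ↦ Y q.1 + Z q.2) 2 (ν.prod ρ) :=
    (hY.comp_fst ρ).add (hZ.comp_snd ν)
  simp_rw [add_assoc]
  rw [variance_add_prod hX hYZ, variance_add_prod hY hZ]

lemma integral_prod_sub_sq (hX : MemLp X 2 μ) :
    ∫ p, (X p.1 - X p.2) ^ 2 ∂(μ.prod μ) = 2 * Var[X; μ] := by
  have hint := hX.integrable one_le_two
  have hmean : ∫ p, (X p.1 - X p.2) ∂(μ.prod μ) = 0 := by
    rw [integral_sub (hint.comp_fst μ) (hint.comp_snd μ), integral_fun_fst, integral_fun_snd]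
    simp
  rw [← variance_of_integral_eq_zero (by fun_prop) hmean]
  simp_rw [sub_eq_add_neg]
  rw [variance_add_prod (Y := fun x ↦ -X x) hX hX.neg, variance_fun_neg]
  ring

end Product

section SquaredIncrements

variable {Ω : Type*} [MeasurableSpace Ω] {ν : Measure Ω} [IsProbabilityMeasure ν]
  {F G₁ G₂ : Ω → ℝ} {A B : ℝ}

lemma memLp_two_of_sq_sub_le (hG₁ : MemLp G₁ 2 ν) (hG₂ : MemLp G₂ 2 ν)
    (hF : AEStronglyMeasurable F ν)
    (hFG : ∀ᵐ p ∂ν.prod ν,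
      (F p.1 - F p.2) ^ 2 ≤ A * (G₁ p.1 - G₁ p.2) ^ 2 + B * (G₂ p.1 - G₂ p.2) ^ 2) :
    MemLp F 2 ν := by
  -- Freeze the first argument at a point `x₀` where the bound holds for a.e. second argument.
  obtain ⟨x₀, hx₀⟩ := (Measure.ae_ae_of_ae_prod hFG).exists
  have hbound : Integrable (fun y ↦ A * (G₁ x₀ - G₁ y) ^ 2 + B * (G₂ x₀ - G₂ y) ^ 2) ν :=
    (((memLp_const _).sub hG₁).integrable_sq.const_mul A).add
      (((memLp_const _).sub hG₂).integrable_sq.const_mul B)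
  have hdiff : MemLp (fun y ↦ F x₀ - F y) 2 ν := by
    refine (memLp_two_iff_integrable_sq (aestronglyMeasurable_const.sub hF)).2 ?_
    refine hbound.mono' (by fun_prop) ?_
    filter_upwards [hx₀] with y hy
    simpa [Real.norm_eq_abs, sq_abs] using hy
  convert (memLp_const (F x₀)).sub hdiff using 1
  ext y
  simp

lemma variance_le_of_sq_sub_le (hF : MemLp F 2 ν) (hG₁ : MemLp G₁ 2 ν) (hG₂ : MemLp G₂ 2 ν)
    (hFG : ∀ᵐ p ∂ν.prod ν,
      (F p.1 - F p.2) ^ 2 ≤ A * (G₁ p.1 - G₁ p.2) ^ 2 + B * (G₂ p.1 - G₂ p.2) ^ 2) :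
    Var[F; ν] ≤ A * Var[G₁; ν] + B * Var[G₂; ν] := by
  have hsq {G : Ω → ℝ} (hG : MemLp G 2 ν) :
      Integrable (fun p : Ω × Ω ↦ (G p.1 - G p.2) ^ 2) (ν.prod ν) :=
    ((hG.comp_fst ν).sub (hG.comp_snd ν)).integrable_sq
  have key : ∫ p, (F p.1 - F p.2) ^ 2 ∂ν.prod ν ≤
      ∫ p, (A * (G₁ p.1 - G₁ p.2) ^ 2 + B * (G₂ p.1 - G₂ p.2) ^ 2) ∂ν.prod ν :=
    integral_mono_ae (hsq hF) (((hsq hG₁).const_mul A).add ((hsq hG₂).const_mul B)) hFG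
  rw [integral_add ((hsq hG₁).const_mul A) ((hsq hG₂).const_mul B), integral_const_mul,
    integral_const_mul, integral_prod_sub_sq hF, integral_prod_sub_sq hG₁,
    integral_prod_sub_sq hG₂] at key
  linarith

lemma variance_prod_le_of_sq_sub_le {μ : Measure ℝ} [IsProbabilityMeasure μ] {F : ℝ × ℝ → ℝ}
    (hμ : MemLp id 2 μ) (hF : MemLp F 2 (μ.prod μ))
    (hFG : ∀ᵐ p ∂(μ.prod μ).prod (μ.prod μ),
      (F p.1 - F p.2) ^ 2 ≤ A * (p.1.1 - p.2.1) ^ 2 + B * (p.1.2 - p.2.2) ^ 2) :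
    Var[F; μ.prod μ] ≤ (A + B) * Var[id; μ] := by
  have h₁ : Var[Prod.fst; μ.prod μ] = Var[id; μ] :=
    measurePreserving_fst.variance_fun_comp (f := id) aemeasurable_id
  have h₂ : Var[Prod.snd; μ.prod μ] = Var[id; μ] :=
    measurePreserving_snd.variance_fun_comp (f := id) aemeasurable_id
  have key := variance_le_of_sq_sub_le (G₁ := Prod.fst) (G₂ := Prod.snd) hF (hμ.comp_fst μ)
    (hμ.comp_snd μ) hFG
  rw [h₁, h₂] at key
  linarith

end SquaredIncrements

lemma isProbabilityMeasure_mu {f : ℝ → ℝ → ℝ} (hf : Measurable fun p : ℝ × ℝ ↦ f p.1 p.2) :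
    ∀ n, IsProbabilityMeasure (mu f n)
  | 0 => ⟨by simp [mu, ← two_mul, ENNReal.mul_inv_cancel]⟩
  | n + 1 =>
    haveI := isProbabilityMeasure_mu hf n
    Measure.isProbabilityMeasure_map (by fun_prop)

section Step

variable {f : ℝ → ℝ → ℝ} {n : ℕ} [IsProbabilityMeasure (mu f n)]

lemma memLp_add_add_mu (hμ : MemLp id 2 (mu f n))
    (hF : MemLp (fun q : ℝ × ℝ ↦ f q.1 q.2) 2 ((mu f n).prod (mu f n))) :
    MemLp (fun p : ℝ × ℝ × ℝ × ℝ ↦ p.1 + p.2.1 + f p.2.2.1 p.2.2.2) 2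
      ((mu f n).prod ((mu f n).prod ((mu f n).prod (mu f n)))) :=
  memLp_add_add_prod hμ hμ hF

lemma memLp_id_mu_succ (hμ : MemLp id 2 (mu f n))
    (hF : MemLp (fun q : ℝ × ℝ ↦ f q.1 q.2) 2 ((mu f n).prod (mu f n))) :
    MemLp id 2 (mu f (n + 1)) :=
  (memLp_map_measure_iff aestronglyMeasurable_id (memLp_add_add_mu hμ hF).aemeasurable).2
    (memLp_add_add_mu hμ hF)

lemma variance_mu_succ (hμ : MemLp id 2 (mu f n))
    (hF : MemLp (fun q : ℝ × ℝ ↦ f q.1 q.2) 2 ((mu f n).prod (mu f n))) :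
    Var[id; mu f (n + 1)] =
      2 * Var[id; mu f n] + Var[fun q : ℝ × ℝ ↦ f q.1 q.2; (mu f n).prod (mu f n)] := by
  rw [mu, variance_id_map (memLp_add_add_mu hμ hF).aemeasurable]
  exact (variance_add_add_prod hμ hμ hF).trans (by ring)

end Step

theorem stmt8_general (f : ℝ → ℝ → ℝ) (n : ℕ) (A B : ℝ) (S : Set ℝ)
    (hf : Measurable (fun p : ℝ × ℝ => f p.1 p.2))
    (hfull : mu f n Sᶜ = 0)
    (h : ∀ a1 ∈ S, ∀ a2 ∈ S, ∀ a3 ∈ S, ∀ a4 ∈ S,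
      (f a1 a2 - f a3 a4) ^ 2 ≤ A * (a1 - a3) ^ 2 + B * (a2 - a4) ^ 2)
    (hmom : Integrable (fun x : ℝ => x ^ 2) (mu f n)) :
    ∫ p : ℝ × ℝ, (p.1 - p.2) ^ 2 ∂((mu f (n + 1)).prod (mu f (n + 1))) ≤
      (2 + A + B) * ∫ p : ℝ × ℝ, (p.1 - p.2) ^ 2 ∂((mu f n).prod (mu f n)) := by
  have := isProbabilityMeasure_mu hf
  set μ := mu f n
  set F : ℝ × ℝ → ℝ := fun q ↦ f q.1 q.2
  have hμ : MemLp id 2 μ := (memLp_two_iff_integrable_sq aestronglyMeasurable_id).2 hmom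
  have hS : ∀ᵐ x ∂μ, x ∈ S := mem_ae_iff.2 hfull
  have hFS : ∀ᵐ p ∂(μ.prod μ).prod (μ.prod μ),
      (F p.1 - F p.2) ^ 2 ≤ A * (p.1.1 - p.2.1) ^ 2 + B * (p.1.2 - p.2.2) ^ 2 := by
    filter_upwards [ae_prod_and (ae_prod_and hS hS) (ae_prod_and hS hS)] with p hp
    exact h _ hp.1.1 _ hp.1.2 _ hp.2.1 _ hp.2.2
  have hF : MemLp F 2 (μ.prod μ) :=
    memLp_two_of_sq_sub_le (hμ.comp_fst μ) (hμ.comp_snd μ) hf.aestronglyMeasurable hFS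
  calc ∫ p : ℝ × ℝ, (p.1 - p.2) ^ 2 ∂(mu f (n + 1)).prod (mu f (n + 1))
      = 2 * Var[id; mu f (n + 1)] := integral_prod_sub_sq (memLp_id_mu_succ hμ hF)
    _ = 2 * (2 * Var[id; μ] + Var[F; μ.prod μ]) := by rw [variance_mu_succ hμ hF]
    _ ≤ (2 + A + B) * (2 * Var[id; μ]) := by
      linarith [variance_prod_le_of_sq_sub_le hμ hF hFS]
    _ = (2 + A + B) * ∫ p : ℝ × ℝ, (p.1 - p.2) ^ 2 ∂μ.prod μ := by
      rw [← integral_prod_sub_sq hμ]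
      rfl

theorem stmt8 (f : ℝ → ℝ → ℝ) (n : ℕ) (A B : ℝ) (S : Set ℝ)
    (hf : Measurable (fun p : ℝ × ℝ => f p.1 p.2))
    (hS : MeasurableSet S)
    (hfull : mu f n Sᶜ = 0)
    (hA : 0 ≤ A) (hB : 0 ≤ B)
    (h : ∀ a1 ∈ S, ∀ a2 ∈ S, ∀ a3 ∈ S, ∀ a4 ∈ S,
      (f a1 a2 - f a3 a4) ^ 2 ≤ A * (a1 - a3) ^ 2 + B * (a2 - a4) ^ 2)
    (hmom : Integrable (fun x : ℝ => x ^ 2) (mu f n)) :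
    ∫ p : ℝ × ℝ, (p.1 - p.2) ^ 2 ∂((mu f (n + 1)).prod (mu f (n + 1))) ≤
      (2 + A + B) * ∫ p : ℝ × ℝ, (p.1 - p.2) ^ 2 ∂((mu f n).prod (mu f n)) :=
  stmt8_general f n A B S hf hfull h hmom
end
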